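/- arXiv:1503.08894 — 3 statements merged into one kernel-verified Lean document; each statement's English description precedes it below -/
import Mathlib

section
/- Let F^q(x) = ₃F₂(1, c, q; a, b; x). Then (a−q−1)(b−q−1)·F^q(x) + q·(a+b−3−2q−(c−q−1)x)·F^{q+1}(x) + q(1+q)(1−x)·F^{q+2}(x) = (a−1)(b−1), as an identity of formal power series (or for |x|<1). -/
noncomputable def poch (a : ℝ) (n : ℕ) : ℝ := (ascPochhammer ℝ n).eval a

/-- Generalized hypergeometric series ₃F₂(a,b,c; d,e; x). -/
noncomputable def F32 (a b c d e x : ℝ) : ℝ :=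
  ∑' n : ℕ, (poch a n * poch b n * poch c n) / (poch d n * poch e n * (n.factorial : ℝ)) * x ^ n

/-- `x` is not a non-positive integer. -/
def NotNonposInt (x : ℝ) : Prop := ∀ m : ℕ, x ≠ -(m : ℝ)

lemma poch_zero (a : ℝ) : poch a 0 = 1 := by simp [poch]

lemma poch_succ (a : ℝ) (n : ℕ) : poch a (n+1) = poch a n * (a + n) := by
  simp [poch, ascPochhammer_succ_right]

lemma poch_succ_left (a : ℝ) (n : ℕ) : poch a (n+1) = a * poch (a+1) n := by
  simp [poch, ascPochhammer_succ_left, Polynomial.eval_comp]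

lemma poch_one (n : ℕ) : poch 1 n = n.factorial := by
  induction n with
  | zero => simp [poch_zero]
  | succ n ih => rw [poch_succ, ih, Nat.factorial_succ]; push_cast; ring

lemma add_nat_ne_zero {a : ℝ} (ha : NotNonposInt a) (n : ℕ) : a + n ≠ 0 := by
  intro h; exact ha n (by linarith)

lemma poch_ne_zero {a : ℝ} (ha : NotNonposInt a) (n : ℕ) : poch a n ≠ 0 := by
  induction n with
  | zero => simp [poch_zero]
  | succ n ih => rw [poch_succ]; exact mul_ne_zero ih (add_nat_ne_zero ha n)

lemma poch_shift1 (q : ℝ) (n : ℕ) : q * poch (q+1) n = poch q n * (q + n) := by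
  rw [← poch_succ_left, poch_succ]

lemma poch_shift2 (q : ℝ) (n : ℕ) :
    q * (1+q) * poch (q+2) n = poch q n * (q + n) * (q + n + 1) := by
  have h1 := poch_succ_left q (n+1)
  have h2 := poch_succ_left (q+1) n
  have h3 := poch_succ q (n+1)
  have h4 := poch_succ q n
  have h5 : q + 1 + 1 = q + 2 := by ring
  rw [h5] at h2
  push_cast at h3
  linear_combination -h1 - q * h2 + h3 + (q + (n:ℝ) + 1) * h4

/-- The `n`-th term of `₃F₂(1,c,p;a,b;x)` with the `(1)_n/n!` simplified away. -/
noncomputable def Tm (a b c p x : ℝ) (n : ℕ) : ℝ :=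
  poch c n * poch p n / (poch a n * poch b n) * x ^ n

open Filter Topology

lemma tendsto_ratio (c a : ℝ) :
    Tendsto (fun n : ℕ => (c + n) / (a + n)) atTop (nhds 1) := by
  have hat : Tendsto (fun n : ℕ => a + (n : ℝ)) atTop atTop :=
    tendsto_atTop_add_const_left atTop a tendsto_natCast_atTop_atTop
  have h0 : Tendsto (fun n : ℕ => 1 + (c - a) / (a + n)) atTop (nhds 1) := by
    have := (tendsto_const_nhds (x := c - a) (f := atTop (α := ℕ))).div_atTop hat
    simpa using tendsto_const_nhds.add this
  refine h0.congr' ?_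
  filter_upwards [hat.eventually_gt_atTop 0] with n hn
  field_simp
  ring

lemma summable_Tm (a b c q x : ℝ) (hx : |x| < 1) : Summable (Tm a b c q x) := by
  set r := (1 + |x|) / 2 with hr
  have hr1 : r < 1 := by rw [hr]; linarith
  have hxr : |x| < r := by rw [hr]; linarith
  have hrho : Tendsto (fun n : ℕ => |x * ((c + n) / (a + n)) * ((q + n) / (b + n))|)
      atTop (nhds |x|) := by
    have : Tendsto (fun n : ℕ => x * ((c + n) / (a + n)) * ((q + n) / (b + n)))
        atTop (nhds x) := by
      have := (tendsto_const_nhds (x := x) (f := atTop (α := ℕ))).mul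
        ((tendsto_ratio c a).mul (tendsto_ratio q b))
      simpa [mul_assoc] using this
    simpa using this.abs
  have hev : ∀ᶠ n : ℕ in atTop, ‖Tm a b c q x (n+1)‖ ≤ r * ‖Tm a b c q x n‖ := by
    filter_upwards [hrho.eventually_lt_const hxr] with n hn
    have key : Tm a b c q x (n+1)
        = Tm a b c q x n * (x * ((c + n) / (a + n)) * ((q + n) / (b + n))) := by
      simp only [Tm, poch_succ]
      push_cast
      field_simp
      ring
    rw [key, norm_mul]
    calc ‖Tm a b c q x n‖ * ‖x * ((c + n)/(a + n)) * ((q + n)/(b + n))‖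
        ≤ ‖Tm a b c q x n‖ * r :=
          mul_le_mul_of_nonneg_left (le_of_lt hn) (norm_nonneg _)
      _ = r * ‖Tm a b c q x n‖ := mul_comm _ _
  exact summable_of_ratio_norm_eventually_le hr1 hev

lemma F32_eq (a b c p x : ℝ) (ha : NotNonposInt a) (hb : NotNonposInt b) :
    F32 1 c p a b x = ∑' n, Tm a b c p x n := by
  unfold F32 Tm
  congr 1
  funext n
  rw [poch_one]
  have hfn : (n.factorial : ℝ) ≠ 0 := Nat.cast_ne_zero.2 n.factorial_ne_zero
  field_simp [poch_ne_zero ha n, poch_ne_zero hb n]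

/-- the "u" combination -/
noncomputable def Uc (a b c q x : ℝ) (n : ℕ) : ℝ :=
  (a-q-1)*(b-q-1) * Tm a b c q x n + (q*(a+b-3-2*q)) * Tm a b c (q+1) x n
    + (q*(1+q)) * Tm a b c (q+2) x n

/-- the "v" combination -/
noncomputable def Vc (a b c q x : ℝ) (n : ℕ) : ℝ :=
  (q*(c-q-1)) * Tm a b c (q+1) x n + (q*(1+q)) * Tm a b c (q+2) x n

lemma Uc_zero (a b c q x : ℝ) : Uc a b c q x 0 = (a-1)*(b-1) := by
  simp only [Uc, Tm, poch_zero]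
  ring

lemma shift1_Tm (a b c q x : ℝ) (m : ℕ) :
    q * Tm a b c (q+1) x m = Tm a b c q x m * (q + m) := by
  simp only [Tm]
  linear_combination (poch c m / (poch a m * poch b m) * x ^ m) * poch_shift1 q m

lemma shift2_Tm (a b c q x : ℝ) (m : ℕ) :
    q * (1+q) * Tm a b c (q+2) x m = Tm a b c q x m * ((q + m) * (q + m + 1)) := by
  simp only [Tm]
  linear_combination (poch c m / (poch a m * poch b m) * x ^ m) * poch_shift2 q m

lemma Uc_succ {a b : ℝ} (c q x : ℝ) (ha : NotNonposInt a) (hb : NotNonposInt b) (n : ℕ) :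
    Uc a b c q x (n+1) = x * Vc a b c q x n := by
  have han := add_nat_ne_zero ha n
  have hbn := add_nat_ne_zero hb n
  have e3 : Tm a b c q x (n+1)
      = Tm a b c q x n * ((c+(n:ℝ)) * (q+(n:ℝ)) / ((a+(n:ℝ))*(b+(n:ℝ)))) * x := by
    simp only [Tm, poch_succ]
    push_cast
    field_simp
    ring
  have expand : Uc a b c q x (n+1)
      = Tm a b c q x (n+1) * ((a-q-1)*(b-q-1) + (q+(n:ℝ)+1)*(a+b-3-2*q)
          + (q+(n:ℝ)+1)*(q+(n:ℝ)+2)) := by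
    have h1 := shift1_Tm a b c q x (n+1)
    have h2 := shift2_Tm a b c q x (n+1)
    push_cast at h1 h2
    unfold Uc
    linear_combination (a+b-3-2*q) * h1 + h2
  have hv : Vc a b c q x n = Tm a b c q x n * ((q+(n:ℝ)) * (c+(n:ℝ))) := by
    unfold Vc
    linear_combination (c-q-1) * shift1_Tm a b c q x n + shift2_Tm a b c q x n
  have alg : (a-q-1)*(b-q-1) + (q+(n:ℝ)+1)*(a+b-3-2*q) + (q+(n:ℝ)+1)*(q+(n:ℝ)+2)
      = (a+(n:ℝ))*(b+(n:ℝ)) := by ring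
  rw [expand, e3, hv, alg]
  field_simp

/-- Three-term contiguous relation in the upper parameter `q` for
`F^q(x) = ₃F₂(1,c,q; a,b; x)`, valid for `|x| < 1`. -/
theorem stmt1 (a b c q x : ℝ) (ha : NotNonposInt a) (hb : NotNonposInt b) (hx : |x| < 1) :
    (a - q - 1) * (b - q - 1) * F32 1 c q a b x
      + q * (a + b - 3 - 2 * q - (c - q - 1) * x) * F32 1 c (q + 1) a b x
      + q * (1 + q) * (1 - x) * F32 1 c (q + 2) a b x
      = (a - 1) * (b - 1) := by
  have hS0 : Summable (Tm a b c q x) := summable_Tm a b c q x hx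
  have hS1 : Summable (Tm a b c (q+1) x) := summable_Tm a b c (q+1) x hx
  have hS2 : Summable (Tm a b c (q+2) x) := summable_Tm a b c (q+2) x hx
  rw [F32_eq a b c q x ha hb, F32_eq a b c (q+1) x ha hb, F32_eq a b c (q+2) x ha hb]
  have hsU : Summable (Uc a b c q x) :=
    ((hS0.mul_left _).add (hS1.mul_left _)).add (hS2.mul_left _)
  have hsV : Summable (Vc a b c q x) := (hS1.mul_left _).add (hS2.mul_left _)
  have H1 : ∑' n, Uc a b c q x n
      = (a-q-1)*(b-q-1) * (∑' n, Tm a b c q x n)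
        + (q*(a+b-3-2*q)) * (∑' n, Tm a b c (q+1) x n)
        + (q*(1+q)) * (∑' n, Tm a b c (q+2) x n) := by
    unfold Uc
    rw [Summable.tsum_add ((hS0.mul_left _).add (hS1.mul_left _)) (hS2.mul_left _),
      Summable.tsum_add (hS0.mul_left _) (hS1.mul_left _), tsum_mul_left, tsum_mul_left,
      tsum_mul_left]
  have H2 : ∑' n, Vc a b c q x n
      = (q*(c-q-1)) * (∑' n, Tm a b c (q+1) x n)
        + (q*(1+q)) * (∑' n, Tm a b c (q+2) x n) := by
    unfold Vc
    rw [Summable.tsum_add (hS1.mul_left _) (hS2.mul_left _), tsum_mul_left, tsum_mul_left]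
  have H3 : ∑' n, Uc a b c q x n = (a-1)*(b-1) + x * ∑' n, Vc a b c q x n := by
    rw [Summable.tsum_eq_zero_add hsU, Uc_zero]
    congr 1
    calc ∑' n, Uc a b c q x (n+1) = ∑' n, x * Vc a b c q x n := by
          exact tsum_congr fun n => Uc_succ c q x ha hb n
      _ = x * ∑' n, Vc a b c q x n := tsum_mul_left
  linear_combination (-1 : ℝ) * H1 + x * H2 + H3
end

section
/- Fix real numbers a, b, c, d such that none of a, b, c, d and none of a+n, b+n, c+n, d+n (n ∈ ℕ) is a non-positive integer, and such that c − a ∉ ℤ, d − a ∉ ℤ, c − b ∉ ℤ and d − b ∉ ℤ. Define a_n = (a)_n(b)_n / ((c)_n(d)_n). Let (x_n)_{n=1}^r and (y_n)_{n=1}^r be finite sequences of rationals such that some x_n ≠ 0 and some y_n ≠ 0. Then the quantity ∑_{n=1}^r (x_n · a_{n+m} + y_n · (n+m) · a_{n+m}) is nonzero for infinitely many integers m ≥ 0. -/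
open Polynomial Finset

/-- `x` is not an integer. -/
def NotInt (x : ℝ) : Prop := ∀ m : ℤ, x ≠ (m : ℝ)

noncomputable def pp (α : ℝ) (k : ℕ) : Polynomial ℝ :=
  ∏ j ∈ Finset.range k, (X + C (α + j))

lemma pp_monic (α : ℝ) (k : ℕ) : (pp α k).Monic :=
  monic_prod_of_monic _ _ fun _ _ => monic_X_add_C _

lemma pp_ne_zero (α : ℝ) (k : ℕ) : pp α k ≠ 0 := (pp_monic α k).ne_zero

lemma poch_prod (x : ℝ) (k : ℕ) : poch x k = ∏ j ∈ Finset.range k, (x + j) := by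
  induction k with
  | zero => simp [poch]
  | succ k ih =>
    rw [poch, ascPochhammer_succ_right, eval_mul, Finset.prod_range_succ, ← ih]
    simp [poch]

lemma poch_ne_zero_s8 {x : ℝ} (h : ∀ j : ℕ, x + j ≠ 0) (k : ℕ) : poch x k ≠ 0 := by
  rw [poch_prod]; exact Finset.prod_ne_zero_iff.2 fun j _ => h j

lemma pp_eval (α t : ℝ) (k : ℕ) : (pp α k).eval t = poch (α + t) k := by
  rw [poch_prod, pp, eval_prod]
  exact Finset.prod_congr rfl fun j _ => by simp; ring

lemma poch_add (x : ℝ) (s k : ℕ) : poch x (s + k) = poch x s * poch (x + s) k := by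
  rw [poch, ← ascPochhammer_mul, eval_mul, eval_comp]
  simp [poch]

lemma rootMult_pp (t α : ℝ) (k : ℕ) [DecidablePred fun j : ℕ => α + (j : ℝ) = -t] :
    rootMultiplicity t (pp α k) =
      ((Finset.range k).filter (fun j : ℕ => α + (j : ℝ) = -t)).card := by
  induction k with
  | zero => simp [pp]
  | succ k ih =>
    rw [pp, Finset.prod_range_succ, ← pp,
      rootMultiplicity_mul (mul_ne_zero (pp_ne_zero α k) (monic_X_add_C _).ne_zero), ih,
      Finset.range_add_one, Finset.filter_insert]
    have h2 : X + C (α + (k:ℝ)) = X - C (-(α + k)) := by rw [map_neg, sub_neg_eq_add]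
    rw [h2, rootMultiplicity_X_sub_C]
    by_cases h : α + (k:ℝ) = -t
    · rw [if_pos h, if_pos (by linarith), Finset.card_insert_of_notMem (by simp), add_comm]
    · rw [if_neg h, if_neg (fun hh => h (by linarith)), add_zero]

lemma pp_eval_ne_zero {α t : ℝ} (h : ∀ j : ℕ, α + t + j ≠ 0) (k : ℕ) :
    (pp α k).eval t ≠ 0 := by
  rw [pp_eval]; exact poch_ne_zero_s8 h k

lemma rootMult_pp_zero {α t : ℝ} (h : ∀ j : ℕ, α + t + j ≠ 0) (k : ℕ) :
    rootMultiplicity t (pp α k) = 0 :=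
  rootMultiplicity_eq_zero (pp_eval_ne_zero h k)

noncomputable def Lpoly (x y : ℕ → ℚ) (k : ℕ) : Polynomial ℝ :=
  C (x k : ℝ) + C (y k : ℝ) * (X + C (k : ℝ))

noncomputable def Fpoly (a b c d : ℝ) (r n : ℕ) : Polynomial ℝ :=
  pp (a+1) (n-1) * pp (b+1) (n-1) * pp (c+n) (r-n) * pp (d+n) (r-n)

noncomputable def Qpoly (a b c d : ℝ) (r : ℕ) (x y : ℕ → ℚ) : Polynomial ℝ :=
  ∑ n ∈ Finset.Icc 1 r, Lpoly x y n * Fpoly a b c d r n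

lemma Fpoly_ne_zero (a b c d : ℝ) (r n : ℕ) : Fpoly a b c d r n ≠ 0 := by
  unfold Fpoly
  exact mul_ne_zero (mul_ne_zero (mul_ne_zero (pp_ne_zero _ _) (pp_ne_zero _ _))
    (pp_ne_zero _ _)) (pp_ne_zero _ _)

lemma Qpoly_swap (a b c d : ℝ) (r : ℕ) (x y : ℕ → ℚ) :
    Qpoly a b c d r x y = Qpoly a b d c r x y := by
  unfold Qpoly Fpoly
  exact Finset.sum_congr rfl fun n _ => by ring

lemma Lpoly_eq_zero {x y : ℕ → ℚ} {k : ℕ} (h : Lpoly x y k = 0) :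
    (x k : ℝ) = 0 ∧ (y k : ℝ) = 0 := by
  have h1 : (Lpoly x y k).coeff 1 = 0 := by rw [h]; simp
  have h0 : (Lpoly x y k).coeff 0 = 0 := by rw [h]; simp
  simp only [Lpoly, coeff_add, coeff_C, mul_add, coeff_C_mul, coeff_X_one, coeff_X_zero,
    mul_zero, mul_one] at h1 h0
  norm_num at h1 h0
  have hy : (y k : ℝ) = 0 := by exact_mod_cast h1
  refine ⟨?_, hy⟩
  have hx : (x k : ℝ) + (y k : ℝ) * k = 0 := by exact_mod_cast h0
  rw [hy] at hx; linarith

lemma Lpoly_natDegree_le (x y : ℕ → ℚ) (k : ℕ) : (Lpoly x y k).natDegree ≤ 1 := by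
  have : Lpoly x y k = C ((y k : ℝ)) * X + C ((x k : ℝ) + (y k : ℝ) * k) := by
    unfold Lpoly; simp only [map_add, map_mul]; ring
  rw [this]
  exact natDegree_linear_le

lemma master (a b c d : ℝ) (hca : NotInt (c - a)) (hcb : NotInt (c - b))
    (r : ℕ) (x y : ℕ → ℚ) (p : ℕ) (hnr : p + 1 ≤ r)
    (hQ : Qpoly a b c d r x y = 0)
    (hhigh : ∀ k, p + 1 < k → k ≤ r → (x k : ℝ) = 0 ∧ (y k : ℝ) = 0) :
    (X - C (-(c + (p:ℝ)))) ^ (if c = d then 2 else 1) ∣ Lpoly x y (p+1) := by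
  classical
  set u : ℝ := -(c + (p:ℝ)) with hu
  -- reduce the sum to Icc 1 (p+1)
  have hQ' : ∑ k ∈ Finset.Icc 1 (p+1), Lpoly x y k * Fpoly a b c d r k = 0 := by
    have hsub : Finset.Icc 1 (p+1) ⊆ Finset.Icc 1 r := Finset.Icc_subset_Icc_right hnr
    have hzero : ∀ k ∈ Finset.Icc 1 r, k ∉ Finset.Icc 1 (p+1) →
        Lpoly x y k * Fpoly a b c d r k = 0 := by
      intro k hk hk'
      simp only [Finset.mem_Icc] at hk hk'
      have hk2 : p + 1 < k := by omega
      obtain ⟨hx0, hy0⟩ := hhigh k hk2 hk.2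
      have hL0 : Lpoly x y k = 0 := by simp [Lpoly, hx0, hy0]
      rw [hL0, zero_mul]
    rw [Finset.sum_subset hsub hzero]
    exact hQ
  have hsum : Lpoly x y (p+1) * Fpoly a b c d r (p+1)
      = -∑ k ∈ Finset.Icc 1 p, Lpoly x y k * Fpoly a b c d r k := by
    have hins : Finset.Icc 1 (p+1) = insert (p+1) (Finset.Icc 1 p) := by
      ext k
      simp only [Finset.mem_Icc, Finset.mem_insert]
      omega
    rw [hins, Finset.sum_insert (by simp)] at hQ'
    linear_combination hQ'
  set ρ : ℕ := rootMultiplicity u (pp (d + ((p+1:ℕ):ℝ)) (r - (p+1))) with hρ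
  set e : ℕ := if c = d then 1 else 0 with he
  -- rootMultiplicity of F at u
  have hFn : rootMultiplicity u (Fpoly a b c d r (p+1)) = ρ := by
    rw [Fpoly,
      rootMultiplicity_mul (mul_ne_zero (mul_ne_zero (mul_ne_zero (pp_ne_zero _ _)
        (pp_ne_zero _ _)) (pp_ne_zero _ _)) (pp_ne_zero _ _)),
      rootMultiplicity_mul (mul_ne_zero (mul_ne_zero (pp_ne_zero _ _) (pp_ne_zero _ _))
        (pp_ne_zero _ _)),
      rootMultiplicity_mul (mul_ne_zero (pp_ne_zero _ _) (pp_ne_zero _ _))]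
    have hA : rootMultiplicity u (pp (a+1) ((p+1)-1)) = 0 := by
      apply rootMult_pp_zero
      intro j hj
      apply hca (1 + (j:ℤ) - (p:ℤ))
      push_cast
      rw [hu] at hj
      linarith
    have hB : rootMultiplicity u (pp (b+1) ((p+1)-1)) = 0 := by
      apply rootMult_pp_zero
      intro j hj
      apply hcb (1 + (j:ℤ) - (p:ℤ))
      push_cast
      rw [hu] at hj
      linarith
    have hC : rootMultiplicity u (pp (c + ((p+1:ℕ):ℝ)) (r - (p+1))) = 0 := by
      apply rootMult_pp_zero
      intro j
      rw [hu]
      push_cast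
      intro hj
      linarith
    rw [hA, hB, hC, hρ]
    ring
  have step2 : ∀ k ∈ Finset.Icc 1 p, (X - C u) ^ (1 + (ρ + e)) ∣ Fpoly a b c d r k := by
    intro k hk
    simp only [Finset.mem_Icc] at hk
    have hdvd1 : (X - C u) ∣ pp (c + (k:ℝ)) (r - k) := by
      have hmem : p - k ∈ Finset.range (r - k) := by
        simp only [Finset.mem_range]; omega
      have harg : c + (k:ℝ) + ((p-k:ℕ):ℝ) = c + p := by
        rw [Nat.cast_sub hk.2]; ring
      have heq : X - C u = X + C (c + (k:ℝ) + ((p-k:ℕ):ℝ)) := by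
        rw [harg, hu, map_neg, sub_neg_eq_add]
      rw [heq, pp]
      exact Finset.dvd_prod_of_mem _ hmem
    have hdvd2 : (X - C u) ^ (ρ + e) ∣ pp (d + (k:ℝ)) (r - k) := by
      by_cases hcd : c = d
      · have hρ0 : ρ = 0 := by
          rw [hρ]
          apply rootMult_pp_zero
          intro j
          rw [hu, ← hcd]
          push_cast
          intro hj
          linarith
        rw [hρ0, he, if_pos hcd, zero_add, pow_one]
        have hmem : p - k ∈ Finset.range (r - k) := by
          simp only [Finset.mem_range]; omega
        have harg : d + (k:ℝ) + ((p-k:ℕ):ℝ) = c + p := by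
          rw [Nat.cast_sub hk.2, ← hcd]; ring
        have heq : X - C u = X + C (d + (k:ℝ) + ((p-k:ℕ):ℝ)) := by
          rw [harg, hu, map_neg, sub_neg_eq_add]
        rw [heq, pp]
        exact Finset.dvd_prod_of_mem _ hmem
      · rw [he, if_neg hcd, add_zero]
        have hρle : ρ ≤ rootMultiplicity u (pp (d + (k:ℝ)) (r - k)) := by
          rw [hρ, rootMult_pp, rootMult_pp]
          apply Finset.card_le_card_of_injOn (fun j => j + (p + 1 - k))
          · intro j hj
            simp only [Finset.mem_coe, Finset.mem_filter, Finset.mem_range] at hj ⊢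
            refine ⟨by omega, ?_⟩
            have hcast : ((j + (p + 1 - k) : ℕ) : ℝ) = (j:ℝ) + ((p+1:ℕ):ℝ) - (k:ℝ) := by
              push_cast [Nat.cast_sub (show k ≤ p + 1 by omega)]
              ring
            rw [hcast]
            have := hj.2
            push_cast at this ⊢
            linarith
          · intro i _ j _ h
            simp only at h
            omega
        exact dvd_trans (pow_dvd_pow _ hρle) (pow_rootMultiplicity_dvd _ _)
    have hcomb : (X - C u) ^ (1 + (ρ + e)) ∣ pp (c+(k:ℝ)) (r-k) * pp (d+(k:ℝ)) (r-k) := by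
      rw [pow_add, pow_one]
      exact mul_dvd_mul hdvd1 hdvd2
    have hFk : Fpoly a b c d r k
        = (pp (a+1) (k-1) * pp (b+1) (k-1)) * (pp (c+(k:ℝ)) (r-k) * pp (d+(k:ℝ)) (r-k)) := by
      rw [Fpoly]; ring
    rw [hFk]
    exact hcomb.mul_left _
  have step3 : (X - C u) ^ (1 + (ρ + e)) ∣ Lpoly x y (p+1) * Fpoly a b c d r (p+1) := by
    rw [hsum, dvd_neg]
    exact Finset.dvd_sum fun k hk => ((step2 k hk).mul_left _)
  by_cases hLn : Lpoly x y (p+1) = 0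
  · rw [hLn]; exact dvd_zero _
  · have hne : Lpoly x y (p+1) * Fpoly a b c d r (p+1) ≠ 0 :=
      mul_ne_zero hLn (Fpoly_ne_zero a b c d r (p+1))
    have hle := (le_rootMultiplicity_iff hne).2 step3
    rw [rootMultiplicity_mul hne, hFn] at hle
    have hle2 : 1 + e ≤ rootMultiplicity u (Lpoly x y (p+1)) := by omega
    have : (X - C u) ^ (if c = d then 2 else 1) ∣ (X - C u) ^ rootMultiplicity u (Lpoly x y (p+1)) := by
      apply pow_dvd_pow
      rw [he] at hle2
      split_ifs at hle2 ⊢ <;> omega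
    exact this.trans (pow_rootMultiplicity_dvd _ _)

lemma sumId (a b c d : ℝ)
    (hc : ∀ n m : ℕ, c + n ≠ -(m : ℝ)) (hd : ∀ n m : ℕ, d + n ≠ -(m : ℝ))
    (r : ℕ) (x y : ℕ → ℚ) (m : ℕ) :
    (∑ n ∈ Finset.Icc 1 r,
        ((x n : ℝ) * (poch a (n + m) * poch b (n + m) / (poch c (n + m) * poch d (n + m)))
          + (y n : ℝ) * ((n : ℝ) + m) *
            (poch a (n + m) * poch b (n + m) / (poch c (n + m) * poch d (n + m)))))
      = (poch a (m+1) * poch b (m+1) / (poch c (m+r) * poch d (m+r)))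
        * (Qpoly a b c d r x y).eval (m : ℝ) := by
  rw [Qpoly, eval_finset_sum, Finset.mul_sum]
  apply Finset.sum_congr rfl
  intro n hn
  simp only [Finset.mem_Icc] at hn
  have hev : (Lpoly x y n * Fpoly a b c d r n).eval (m:ℝ)
      = ((x n : ℝ) + (y n : ℝ) * ((n:ℝ) + m)) *
        ((pp (a+1) (n-1)).eval (m:ℝ) * (pp (b+1) (n-1)).eval (m:ℝ)
          * (pp (c+n) (r-n)).eval (m:ℝ) * (pp (d+n) (r-n)).eval (m:ℝ)) := by
    simp only [Lpoly, Fpoly, eval_mul, eval_add, eval_C, eval_X]; ring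
  have h1 : poch a (n+m) = poch a (m+1) * poch (a+1+(m:ℝ)) (n-1) := by
    rw [show n+m = (m+1)+(n-1) from by omega, poch_add]
    have : a + ((m+1:ℕ):ℝ) = a+1+(m:ℝ) := by push_cast; ring
    rw [this]
  have h2 : poch b (n+m) = poch b (m+1) * poch (b+1+(m:ℝ)) (n-1) := by
    rw [show n+m = (m+1)+(n-1) from by omega, poch_add]
    have : b + ((m+1:ℕ):ℝ) = b+1+(m:ℝ) := by push_cast; ring
    rw [this]
  have h3 : poch c (m+r) = poch c (n+m) * poch (c+(n:ℝ)+(m:ℝ)) (r-n) := by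
    rw [show m+r = (n+m)+(r-n) from by omega, poch_add]
    have : c + ((n+m:ℕ):ℝ) = c + (n:ℝ) + (m:ℝ) := by push_cast; ring
    rw [this]
  have h4 : poch d (m+r) = poch d (n+m) * poch (d+(n:ℝ)+(m:ℝ)) (r-n) := by
    rw [show m+r = (n+m)+(r-n) from by omega, poch_add]
    have : d + ((n+m:ℕ):ℝ) = d + (n:ℝ) + (m:ℝ) := by push_cast; ring
    rw [this]
  have hc0 : poch c (n+m) ≠ 0 := poch_ne_zero_s8 (fun j => by simpa using hc j 0) _
  have hd0 : poch d (n+m) ≠ 0 := poch_ne_zero_s8 (fun j => by simpa using hd j 0) _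
  have hc1 : poch (c+(n:ℝ)+(m:ℝ)) (r-n) ≠ 0 := by
    apply poch_ne_zero_s8; intro j
    have h := hc (n+m+j) 0; push_cast at h
    intro hh; apply h; linarith
  have hd1 : poch (d+(n:ℝ)+(m:ℝ)) (r-n) ≠ 0 := by
    apply poch_ne_zero_s8; intro j
    have h := hd (n+m+j) 0; push_cast at h
    intro hh; apply h; linarith
  rw [hev, pp_eval, pp_eval, pp_eval, pp_eval, h1, h2, h3, h4]
  field_simp

lemma keyB (a b c d : ℝ)
    (hca : NotInt (c - a)) (hda : NotInt (d - a))
    (hcb : NotInt (c - b)) (hdb : NotInt (d - b))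
    (r : ℕ) (x y : ℕ → ℚ) (hQ : Qpoly a b c d r x y = 0) :
    ∀ n, 1 ≤ n → n ≤ r → (x n : ℝ) = 0 ∧ (y n : ℝ) = 0 := by
  have core : ∀ n, 1 ≤ n → n ≤ r →
      (∀ k, n < k → k ≤ r → (x k : ℝ) = 0 ∧ (y k : ℝ) = 0) →
      (x n : ℝ) = 0 ∧ (y n : ℝ) = 0 := by
    intro n h1 h2 hhigh
    obtain ⟨p, rfl⟩ : ∃ p, n = p + 1 := ⟨n - 1, by omega⟩
    have Du := master a b c d hca hcb r x y p h2 hQ hhigh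
    have Dv := master a b d c hda hdb r x y p h2 ((Qpoly_swap a b c d r x y) ▸ hQ) hhigh
    by_cases hcd : c = d
    · rw [if_pos hcd] at Du
      by_cases hLn : Lpoly x y (p+1) = 0
      · exact Lpoly_eq_zero hLn
      · exfalso
        have hdeg := Polynomial.natDegree_le_of_dvd Du hLn
        rw [natDegree_pow, natDegree_X_sub_C] at hdeg
        have := Lpoly_natDegree_le x y (p+1)
        omega
    · rw [if_neg hcd, pow_one, dvd_iff_isRoot] at Du
      rw [if_neg (fun h => hcd h.symm), pow_one, dvd_iff_isRoot] at Dv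
      simp only [IsRoot, Lpoly, eval_add, eval_mul, eval_C, eval_X] at Du Dv
      have hsub : (y (p+1) : ℝ) * (d - c) = 0 := by linear_combination Du - Dv
      have hy0 : (y (p+1) : ℝ) = 0 := by
        rcases mul_eq_zero.1 hsub with h | h
        · exact h
        · exact absurd (sub_eq_zero.mp h).symm hcd
      refine ⟨?_, hy0⟩
      rw [hy0] at Du
      linarith
  have main : ∀ j n, r ≤ n + j → 1 ≤ n → n ≤ r → (x n:ℝ) = 0 ∧ (y n:ℝ) = 0 := by
    intro j
    induction j with
    | zero =>
      intro n hr h1 h2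
      exact core n h1 h2 (fun k hk1 hk2 => absurd hk2 (by omega))
    | succ j ih =>
      intro n hr h1 h2
      exact core n h1 h2 (fun k hk1 hk2 => ih k (by omega) (by omega) hk2)
  intro n h1 h2
  exact main r n (by omega) h1 h2

/-- Non-vanishing of `∑ₙ (xₙ a_{n+m} + yₙ (n+m) a_{n+m})` for infinitely many `m`, where
`a_n = (a)ₙ(b)ₙ/((c)ₙ(d)ₙ)`. -/
theorem stmt8 (a b c d : ℝ)
    (ha : ∀ n m : ℕ, a + n ≠ -(m : ℝ)) (hb : ∀ n m : ℕ, b + n ≠ -(m : ℝ))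
    (hc : ∀ n m : ℕ, c + n ≠ -(m : ℝ)) (hd : ∀ n m : ℕ, d + n ≠ -(m : ℝ))
    (hca : NotInt (c - a)) (hda : NotInt (d - a))
    (hcb : NotInt (c - b)) (hdb : NotInt (d - b))
    (r : ℕ) (x y : ℕ → ℚ)
    (hx : ∃ n ∈ Finset.Icc 1 r, x n ≠ 0) (hy : ∃ n ∈ Finset.Icc 1 r, y n ≠ 0) :
    {m : ℕ | (∑ n ∈ Finset.Icc 1 r,
        ((x n : ℝ) * (poch a (n + m) * poch b (n + m) / (poch c (n + m) * poch d (n + m)))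
          + (y n : ℝ) * ((n : ℝ) + m) *
            (poch a (n + m) * poch b (n + m) / (poch c (n + m) * poch d (n + m))))) ≠ 0
      }.Infinite := by
  by_contra hfin
  rw [Set.not_infinite] at hfin
  obtain ⟨M, hM⟩ := hfin.bddAbove
  have hS : ∀ m : ℕ, M < m → (∑ n ∈ Finset.Icc 1 r,
        ((x n : ℝ) * (poch a (n + m) * poch b (n + m) / (poch c (n + m) * poch d (n + m)))
          + (y n : ℝ) * ((n : ℝ) + m) *
            (poch a (n + m) * poch b (n + m) / (poch c (n + m) * poch d (n + m))))) = 0 := by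
    intro m hm
    by_contra hne
    have : m ≤ M := hM hne
    omega
  have hQ0 : Qpoly a b c d r x y = 0 := by
    apply Polynomial.eq_zero_of_infinite_isRoot
    apply Set.infinite_of_injective_forall_mem (f := fun j : ℕ => ((M + 1 + j : ℕ) : ℝ))
    · intro i j hij
      simp only [] at hij
      have : M + 1 + i = M + 1 + j := by exact_mod_cast hij
      omega
    · intro j
      simp only [Set.mem_setOf_eq, IsRoot]
      have hs := hS (M+1+j) (by omega)
      rw [sumId a b c d hc hd r x y (M+1+j)] at hs
      have hK : poch a ((M+1+j)+1) * poch b ((M+1+j)+1)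
          / (poch c ((M+1+j)+r) * poch d ((M+1+j)+r)) ≠ 0 := by
        apply div_ne_zero
        · exact mul_ne_zero (poch_ne_zero_s8 (fun j' => by simpa using ha j' 0) _)
            (poch_ne_zero_s8 (fun j' => by simpa using hb j' 0) _)
        · exact mul_ne_zero (poch_ne_zero_s8 (fun j' => by simpa using hc j' 0) _)
            (poch_ne_zero_s8 (fun j' => by simpa using hd j' 0) _)
      rcases mul_eq_zero.1 hs with h | h
      · exact absurd h hK
      · exact h
  obtain ⟨n, hn, hxn⟩ := hx
  simp only [Finset.mem_Icc] at hn
  have := (keyB a b c d hca hda hcb hdb r x y hQ0 n hn.1 hn.2).1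
  exact hxn (by exact_mod_cast this)
end

section
/- Let a, b, c, d be real numbers, none of which is congruent mod ℤ to any other in the pairs (a,c), (a,d), (b,c), (b,d), and none of a, b equal to a non-positive integer shifted value. For 1 ≤ j ≤ r, define the polynomial P_j(t) = (a+t)_j (b+t)_j (c+t+j)_{r−j} (d+t+j)_{r−j} of degree 2r (Pochhammer in the first variable). If c_1, …, c_r, d_1, …, d_r are rationals with ∑_{j=1}^r (c_j + d_j t) P_j(t) = 0 identically, then c_j = d_j = 0 for all j. -/
/-- The polynomial (in `t`) `P_j(t) = (a+t)_j (b+t)_j (c+t+j)_{r−j} (d+t+j)_{r−j}`. -/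
noncomputable def P (a b c d : ℝ) (r j : ℕ) (t : ℝ) : ℝ :=
  poch (a + t) j * poch (b + t) j * poch (c + t + j) (r - j) * poch (d + t + j) (r - j)

/-!
Induct on `r`. For `j ≤ r` one has `P^{(r+1)}_j = P^{(r)}_j · (t+c+r)(t+d+r)`, so a relation
`∑ (c_j + d_j t) P^{(r+1)}_j = 0` shows that `(t+c+r)(t+d+r)` divides
`(c_{r+1} + d_{r+1} t) P^{(r+1)}_{r+1}`.
Since `a - c`, `a - d`, `b - c`, `b - d` are not integers,
`P^{(r+1)}_{r+1} = (a+t)_{r+1} (b+t)_{r+1}` does not vanish at `-(c+r)` or `-(d+r)`, hence is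
coprime to that quadratic, which must then divide the linear factor. So the top coefficients vanish and the relation descends to level `r`.
-/

open Polynomial Finset

lemma NotInt.sub_natCast {x : ℝ} (hx : NotInt x) (k : ℕ) : NotInt (x - k) := fun m hm =>
  hx (m + k) (by push_cast; linarith)

lemma NotInt.poch_ne_zero {x : ℝ} (hx : NotInt x) (n : ℕ) : poch x n ≠ 0 := by
  rintro h
  obtain ⟨k, -, hk⟩ := (ascPochhammer_eval_eq_zero_iff n x).mp h
  exact hx (-k) (by push_cast; linarith)

theorem Polynomial.eq_zero_of_X_sub_C_mul_X_sub_C_dvd_mul {K : Type*} [Field K]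
    {L A : K[X]} {z w : K} (hL : L.degree < 2) (hz : A.eval z ≠ 0) (hw : A.eval w ≠ 0)
    (h : (X - C z) * (X - C w) ∣ L * A) : L = 0 := by
  -- Coprimality, rather than divisibility by each factor, also covers the double root `z = w`.
  have coprime (x : K) (hx : A.eval x ≠ 0) : IsCoprime (X - C x) A :=
    (irreducible_X_sub_C x).coprime_iff_not_dvd.mpr (by rwa [dvd_iff_isRoot])
  refine eq_zero_of_dvd_of_degree_lt
    (((coprime z hz).mul_left (coprime w hw)).dvd_of_dvd_mul_right h) ?_
  rwa [degree_mul, degree_X_sub_C, degree_X_sub_C]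

noncomputable def pochPoly (α : ℝ) (n : ℕ) : ℝ[X] := (ascPochhammer ℝ n).comp (C α + X)

lemma pochPoly_eval (α : ℝ) (n : ℕ) (t : ℝ) : (pochPoly α n).eval t = poch (α + t) n := by
  simp [pochPoly, poch, eval_comp]

lemma pochPoly_succ (α : ℝ) (n : ℕ) :
    pochPoly α (n + 1) = pochPoly α n * (X - C (-(α + n))) := by
  simp only [pochPoly, ascPochhammer_succ_right, mul_comp, add_comp, X_comp, natCast_comp,
    C_neg, sub_neg_eq_add, map_add, map_natCast]
  ring

noncomputable def Ppoly (a b c d : ℝ) (r j : ℕ) : ℝ[X] :=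
  pochPoly a j * pochPoly b j * pochPoly (c + j) (r - j) * pochPoly (d + j) (r - j)

lemma Ppoly_eval (a b c d : ℝ) (r j : ℕ) (t : ℝ) :
    (Ppoly a b c d r j).eval t = P a b c d r j t := by
  simp only [Ppoly, P, eval_mul, pochPoly_eval]
  ring_nf

lemma Ppoly_succ_of_le (a b c d : ℝ) {r j : ℕ} (hj : j ≤ r) :
    Ppoly a b c d (r + 1) j =
      Ppoly a b c d r j * ((X - C (-(c + r))) * (X - C (-(d + r)))) := by
  have hc : ((r - j : ℕ) : ℝ) = r - j := Nat.cast_sub hj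
  rw [Ppoly, Ppoly, Nat.sub_add_comm hj, pochPoly_succ, pochPoly_succ, hc]
  ring_nf

lemma Ppoly_self_eval_ne_zero {a b e : ℝ} (c d : ℝ)
    (hae : NotInt (a - e)) (hbe : NotInt (b - e)) (n k : ℕ) : (Ppoly a b c d n n).eval (-(e + k)) ≠ 0 := by
  have hpoch (x : ℝ) (hx : NotInt (x - e)) : poch (x + -(e + k)) n ≠ 0 := by
    rw [show x + -(e + k) = x - e - k by ring]
    exact (hx.sub_natCast k).poch_ne_zero n
  simp only [Ppoly, Nat.sub_self, eval_mul, pochPoly_eval]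
  simpa [poch] using mul_ne_zero (hpoch a hae) (hpoch b hbe)

lemma sum_Icc_succ_mul_Ppoly (a b c d : ℝ) (r : ℕ) (f : ℕ → ℝ[X]) :
    ∑ j ∈ Icc 1 (r + 1), f j * Ppoly a b c d (r + 1) j =
      f (r + 1) * Ppoly a b c d (r + 1) (r + 1) +
        (∑ j ∈ Icc 1 r, f j * Ppoly a b c d r j) * ((X - C (-(c + r))) * (X - C (-(d + r)))) := by
  rw [sum_Icc_succ_top (by omega), add_comm, sum_mul]
  congr 1
  refine sum_congr rfl fun j hj => ?_
  rw [Ppoly_succ_of_le a b c d (mem_Icc.mp hj).2, mul_assoc]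

theorem eq_zero_of_sum_linear_mul_Ppoly_eq_zero {a b c d : ℝ}
    (hac : NotInt (a - c)) (had : NotInt (a - d)) (hbc : NotInt (b - c)) (hbd : NotInt (b - d))
    (r : ℕ) (u v : ℕ → ℝ)
    (h : ∑ j ∈ Icc 1 r, (C (v j) * X + C (u j)) * Ppoly a b c d r j = 0) :
    ∀ j ∈ Icc 1 r, u j = 0 ∧ v j = 0 := by
  induction r with
  | zero => simp
  | succ r ih =>
    rw [sum_Icc_succ_mul_Ppoly] at h
    have htop : C (v (r + 1)) * X + C (u (r + 1)) = 0 :=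
      eq_zero_of_X_sub_C_mul_X_sub_C_dvd_mul degree_linear_lt
        (Ppoly_self_eval_ne_zero c d hac hbc _ _) (Ppoly_self_eval_ne_zero c d had hbd _ _)
        ((dvd_add_left (dvd_mul_left _ _)).mp (h ▸ dvd_zero _))
    rw [htop, zero_mul, zero_add, mul_eq_zero,
      or_iff_left (mul_ne_zero (X_sub_C_ne_zero _) (X_sub_C_ne_zero _))] at h
    intro j hj
    obtain ⟨hj1, hj2⟩ := mem_Icc.mp hj
    obtain rfl | hjr := eq_or_ne j (r + 1)
    · exact ⟨by simpa using congrArg (coeff · 0) htop, by simpa using congrArg (coeff · 1) htop⟩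
    · exact ih h j (mem_Icc.mpr ⟨hj1, by omega⟩)

theorem stmt9_general (a b c d : ℝ) (r : ℕ)
    (hac : NotInt (a - c)) (had : NotInt (a - d))
    (hbc : NotInt (b - c)) (hbd : NotInt (b - d))
    (cs ds : ℕ → ℚ)
    (h : ∀ t : ℝ, ∑ j ∈ Finset.Icc 1 r, ((cs j : ℝ) + (ds j : ℝ) * t) * P a b c d r j t = 0) :
    ∀ j ∈ Finset.Icc 1 r, cs j = 0 ∧ ds j = 0 := by
  have hpoly : ∑ j ∈ Icc 1 r, (C (ds j : ℝ) * X + C (cs j : ℝ)) * Ppoly a b c d r j = 0 :=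
    funext fun t => by simpa [eval_finsetSum, Ppoly_eval, add_comm] using h t
  intro j hj
  exact_mod_cast eq_zero_of_sum_linear_mul_Ppoly_eq_zero hac had hbc hbd r _ _ hpoly j hj

/-- Linear independence lemma: if `∑_{j=1}^r (c_j + d_j t) P_j(t) = 0` identically,
then all `c_j = d_j = 0`. -/
theorem stmt9 (a b c d : ℝ) (r : ℕ)
    (hac : NotInt (a - c)) (had : NotInt (a - d))
    (hbc : NotInt (b - c)) (hbd : NotInt (b - d))
    (ha : ∀ n m : ℕ, a + n ≠ -(m : ℝ)) (hb : ∀ n m : ℕ, b + n ≠ -(m : ℝ))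
    (cs ds : ℕ → ℚ)
    (h : ∀ t : ℝ, ∑ j ∈ Finset.Icc 1 r, ((cs j : ℝ) + (ds j : ℝ) * t) * P a b c d r j t = 0) :
    ∀ j ∈ Finset.Icc 1 r, cs j = 0 ∧ ds j = 0 :=
  stmt9_general a b c d r hac had hbc hbd cs ds h
end
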